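/- Let (X_n, x_n), n ≥ 1, be Gromov product spaces and (X, x) a Gromov product space such that (X_n, x_n) → (X, x) in the pointed Gromov–Hausdorff sense. If the boundaries (∂_P X_n, ρ_{x_n}), n ≥ 1, form an equicontinuous family of antipodal spaces, then (∂_P X_n, ρ_{x_n}) AI-converges to (∂_P X, ρ_x). -/

import Mathlib

open Filter Topology Metric
open scoped ENNReal

universe u v

/-- A semi-metric (separating function) on a compact metrizable space: continuous, symmetric,
nonnegative, and vanishing exactly on the diagonal. -/
def IsSemiMetric {Z : Type*} [TopologicalSpace Z] (ρ : Z → Z → ℝ) : Prop :=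
  Continuous (Function.uncurry ρ) ∧ (∀ ξ η, ρ ξ η = ρ η ξ) ∧
    (∀ ξ η, 0 ≤ ρ ξ η) ∧ ∀ ξ η, ρ ξ η = 0 ↔ ξ = η

/-- An antipodal function: a semi-metric of diameter at most one such that every point has an
antipode at distance one. -/
def IsAntipodalFn {Z : Type*} [TopologicalSpace Z] (ρ : Z → Z → ℝ) : Prop :=
  IsSemiMetric ρ ∧ (∀ ξ η, ρ ξ η ≤ 1) ∧ ∀ ξ, ∃ η, ρ ξ η = 1

/-- An `ε`-isometry between semi-metric spaces: distortion less than `ε`, and the image is an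
`ε`-net. -/
def IsEpsIsometry {Z₁ : Type*} {Z₂ : Type*} (ρ₁ : Z₁ → Z₁ → ℝ) (ρ₂ : Z₂ → Z₂ → ℝ)
    (ε : ℝ) (f : Z₁ → Z₂) : Prop :=
  (∀ ξ η : Z₁, |ρ₂ (f ξ) (f η) - ρ₁ ξ η| < ε) ∧ ∀ ζ : Z₂, ∃ ξ : Z₁, ρ₂ (f ξ) ζ < ε

/-- AI-convergence of a sequence of semi-metric spaces `(Z n, ρ n)` to `(W, ρ₀)`: there are
`ε n`-isometries `(Z n, ρ n) → (W, ρ₀)` with `ε n → 0+`. -/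
def AIConverges {Z : ℕ → Type u} (ρ : ∀ n, Z n → Z n → ℝ) {W : Type v} (ρ₀ : W → W → ℝ) : Prop :=
  ∃ ε : ℕ → ℝ, (∀ n, 0 < ε n) ∧ Tendsto ε atTop (𝓝 0) ∧
    ∀ n, ∃ f : Z n → W, IsEpsIsometry (ρ n) ρ₀ (ε n) f

/-- An equicontinuous family of semi-metric spaces. -/
def EquicontinuousFamily {ι : Type*} {Z : ι → Type*} (ρ : ∀ i, Z i → Z i → ℝ) : Prop :=
  ∀ ε : ℝ, 0 < ε → ∃ δ : ℝ, 0 < δ ∧ ∀ (i : ι) (ξ η : Z i), ρ i ξ η < δ →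
    ∀ ζ : Z i, |ρ i ξ ζ - ρ i η ζ| < ε

/-- Pointed Gromov–Hausdorff convergence of pointed metric spaces `(X n, p n) → (Y, q)`:
for every `R > 0` and `ε > 0`, for all sufficiently large `n` there is a map between the closed
balls of radius `R` around the base points, sending base point to base point, with distortion
less than `ε` and whose image is an `ε`-net. -/
def PointedGHConverges (X : ℕ → Type u) [∀ n, MetricSpace (X n)] (p : ∀ n, X n)
    (Y : Type v) [MetricSpace Y] (q : Y) : Prop :=
  ∀ (R : ℝ) (hR : 0 < R) (ε : ℝ) (_ : 0 < ε), ∃ N : ℕ, ∀ n, N ≤ n →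
    ∃ f : Metric.closedBall (p n) R → Metric.closedBall q R,
      ((f ⟨p n, Metric.mem_closedBall_self hR.le⟩ : Y) = q) ∧
      (∀ a b : Metric.closedBall (p n) R,
        |dist (f a : Y) (f b : Y) - dist (a : X n) (b : X n)| < ε) ∧
      ∀ z : Metric.closedBall q R, ∃ a : Metric.closedBall (p n) R, dist (f a : Y) (z : Y) < ε

/-- A geodesic segment from `x` to `y`, parametrized by arclength on `[0, dist x y]`. -/
def IsGeodesicSegment {X : Type*} [MetricSpace X] (γ : ℝ → X) (x y : X) : Prop :=
  γ 0 = x ∧ γ (dist x y) = y ∧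
    ∀ s ∈ Set.Icc (0:ℝ) (dist x y), ∀ t ∈ Set.Icc (0:ℝ) (dist x y), dist (γ s) (γ t) = |s - t|

/-- A geodesic metric space: any two points are joined by a geodesic segment. -/
def IsGeodesicSpace (X : Type*) [MetricSpace X] : Prop :=
  ∀ x y : X, ∃ γ : ℝ → X, IsGeodesicSegment γ x y

/-- Geodesic completeness: any geodesic segment extends to a bi-infinite geodesic. -/
def IsGeodesicallyComplete (X : Type*) [MetricSpace X] : Prop :=
  ∀ (x y : X) (γ : ℝ → X), IsGeodesicSegment γ x y →
    ∃ γ' : ℝ → X, (∀ s t : ℝ, dist (γ' s) (γ' t) = |s - t|) ∧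
      ∀ s ∈ Set.Icc (0:ℝ) (dist x y), γ' s = γ s

/-- The data of a Gromov product space: a proper, geodesic, geodesically complete metric space
`X` together with a second countable Hausdorff compactification on which all the Gromov products
`(·|·)_x` extend continuously (with values in `[0, ∞]`), the extension being `∞` at a pair of
boundary points iff the two points coincide. -/
structure GromovProductData (X : Type u) [MetricSpace X] : Type (u + 1) where
  geodesic : IsGeodesicSpace X
  geodesicallyComplete : IsGeodesicallyComplete X
  proper : ∀ (x : X) (r : ℝ), IsCompact (Metric.closedBall x r)
  Compactification : Type u
  [topC : TopologicalSpace Compactification]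
  compactC : CompactSpace Compactification
  t2C : T2Space Compactification
  secondCountableC : SecondCountableTopology Compactification
  incl : X → Compactification
  isEmbedding_incl : Topology.IsEmbedding incl
  dense_incl : Dense (Set.range incl)
  Boundary : Type u
  [topB : TopologicalSpace Boundary]
  bIncl : Boundary → Compactification
  isEmbedding_bIncl : Topology.IsEmbedding bIncl
  range_bIncl : Set.range bIncl = (Set.range incl)ᶜ
  gp : X → Compactification → Compactification → ℝ≥0∞
  continuous_gp : ∀ x : X,
    Continuous (fun pq : Compactification × Compactification => gp x pq.1 pq.2)
  gp_eq : ∀ x y z : X,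
    gp x (incl y) (incl z) = ENNReal.ofReal ((dist y x + dist z x - dist y z) / 2)
  gp_top_iff : ∀ (x : X) (ξ η : Boundary), gp x (bIncl ξ) (bIncl η) = ⊤ ↔ ξ = η

attribute [instance] GromovProductData.topC GromovProductData.topB

/-- The visual antipodal function `ρ_x = exp (−(·|·)_x)` on the Gromov product boundary. -/
noncomputable def GromovProductData.visual {X : Type u} [MetricSpace X]
    (D : GromovProductData X) (x : X) : D.Boundary → D.Boundary → ℝ :=
  fun ξ η =>
    if D.gp x (D.bIncl ξ) (D.bIncl η) = ⊤ then 0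
    else Real.exp (-(D.gp x (D.bIncl ξ) (D.bIncl η)).toReal)

/-- Maximality of a Gromov product space, via the equivalent characterization: for every `x`,
the visual embedding `y ↦ ρ_y` is an isometry of `X` onto the Moebius space
`𝓜(∂_P X, ρ_x)`, i.e. it is isometric (the distance of `y, z` equals the sup-norm of
`log (dρ_z/dρ_y)`) and surjective onto the set of antipodal functions Moebius equivalent
to `ρ_x`. -/
def GromovProductData.IsMaximal {X : Type u} [MetricSpace X] (D : GromovProductData X) : Prop :=
  ∀ x : X,
    (∀ y z : X, ∃ τ : D.Boundary → ℝ,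
      (∀ ξ η, D.visual z ξ η ^ 2 = Real.exp (τ ξ) * Real.exp (τ η) * D.visual y ξ η ^ 2) ∧
      IsLUB (Set.range fun ξ => |τ ξ|) (dist y z)) ∧
    ∀ β : D.Boundary → D.Boundary → ℝ, IsAntipodalFn β →
      (∃ τ : D.Boundary → ℝ, Continuous τ ∧
        ∀ ξ η, β ξ η ^ 2 = Real.exp (τ ξ) * Real.exp (τ η) * D.visual x ξ η ^ 2) →
      ∃ y : X, D.visual y = β

/-!
For points `p, p'` far from the base point `x` and ray endpoints `ξ, ξ'` of them (boundary points
with `(p|ξ)_x = d(p, x)`), one has `ρ_x(ξ, ξ') ≈ exp (-(p|p')_x)`, uniformly under an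
equicontinuity modulus. The upper bound always holds; for the lower bound, the two ends `α, β`
of a geodesic line through `p` and `p'` satisfy `ρ_x(α, β) ≥ exp (-(p|p')_x)` and are close to
`ξ, ξ'` whenever `(p|p')_x` is small compared with `d(p, x)` and `d(p', x)`. A pointed
Gromov–Hausdorff approximation almost preserves Gromov products of points in a large ball, so
sending a boundary point seen from a far point `p` to a ray endpoint of the image of `p` almost
preserves `ρ`; its image is almost dense by the same estimate applied to a net point.
-/

theorem IsEpsIsometry.mono {Z₁ Z₂ : Type*} {ρ₁ : Z₁ → Z₁ → ℝ} {ρ₂ : Z₂ → Z₂ → ℝ}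
    {ε ε' : ℝ} {f : Z₁ → Z₂} (hf : IsEpsIsometry ρ₁ ρ₂ ε f) (hε : ε ≤ ε') :
    IsEpsIsometry ρ₁ ρ₂ ε' f :=
  ⟨fun ξ η => (hf.1 ξ η).trans_le hε, fun ζ => (hf.2 ζ).imp fun _ h => h.trans_le hε⟩

theorem isEpsIsometry_two_of_mem_Icc {Z₁ Z₂ : Type*} [Nonempty Z₁] {ρ₁ : Z₁ → Z₁ → ℝ}
    {ρ₂ : Z₂ → Z₂ → ℝ} (h₁ : ∀ ξ η, ρ₁ ξ η ∈ Set.Icc 0 1)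
    (h₂ : ∀ ξ η, ρ₂ ξ η ∈ Set.Icc 0 1) (f : Z₁ → Z₂) : IsEpsIsometry ρ₁ ρ₂ 2 f := by
  refine ⟨fun ξ η => ?_, fun ζ => ⟨Classical.arbitrary Z₁, ?_⟩⟩
  · obtain ⟨h₁0, h₁1⟩ := h₁ ξ η
    obtain ⟨h₂0, h₂1⟩ := h₂ (f ξ) (f η)
    rw [abs_lt]; constructor <;> linarith
  · linarith [(h₂ (f (Classical.arbitrary Z₁)) ζ).2]

/-- The errors `ε n` are the optimal ones, pushed up by `1 / (n + 1)` so as to be attained. -/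
theorem aiConverges_of_eventually_isEpsIsometry {Z : ℕ → Type u}
    {ρ : ∀ n, Z n → Z n → ℝ} {W : Type v} {ρ₀ : W → W → ℝ}
    (hbdd : ∀ n, ∃ C > 0, ∃ f : Z n → W, IsEpsIsometry (ρ n) ρ₀ C f)
    (h : ∀ ε > 0, ∀ᶠ n in atTop, ∃ f : Z n → W, IsEpsIsometry (ρ n) ρ₀ ε f) :
    AIConverges ρ ρ₀ := by
  set S : ℕ → Set ℝ := fun n =>
    {ε | 0 < ε ∧ ∃ f : Z n → W, IsEpsIsometry (ρ n) ρ₀ ε f}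
  have hS : ∀ n, (S n).Nonempty := fun n => (hbdd n).imp fun _ hC => hC
  have hS0 : ∀ n, BddBelow (S n) := fun n => ⟨0, fun _ hε => hε.1.le⟩
  have hinf0 : ∀ n, 0 ≤ sInf (S n) := fun n => le_csInf (hS n) fun _ hε => hε.1.le
  have hinf : Tendsto (fun n => sInf (S n)) atTop (𝓝 0) := by
    refine tendsto_order.2 ⟨fun a ha => .of_forall fun n => ha.trans_le (hinf0 n),
      fun a ha => (h (a / 2) (half_pos ha)).mono fun n ⟨f, hf⟩ => ?_⟩
    exact (csInf_le (hS0 n) ⟨half_pos ha, f, hf⟩).trans_lt (half_lt_self ha)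
  refine ⟨fun n => sInf (S n) + 1 / (n + 1), fun n => ?_, ?_, fun n => ?_⟩
  · exact add_pos_of_nonneg_of_pos (hinf0 n) Nat.one_div_pos_of_nat
  · simpa using hinf.add tendsto_one_div_add_atTop_nhds_zero_nat
  · obtain ⟨ε, ⟨-, f, hf⟩, hlt⟩ :=
      exists_lt_of_csInf_lt (hS n) (lt_add_of_pos_right _ Nat.one_div_pos_of_nat)
    exact ⟨f, hf.mono hlt.le⟩

theorem abs_exp_neg_sub_exp_neg_le {a b : ℝ} (ha : 0 ≤ a) (hb : 0 ≤ b) :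
    |Real.exp (-a) - Real.exp (-b)| ≤ |a - b| := by
  wlog hab : a ≤ b generalizing a b
  · rw [abs_sub_comm, abs_sub_comm a]
    exact this hb ha (le_of_not_ge hab)
  have hexp : Real.exp (-b) = Real.exp (-a) * Real.exp (-(b - a)) := by
    rw [← Real.exp_add]; ring_nf
  rw [abs_of_nonneg (by simpa using hab), abs_of_nonpos (by linarith), hexp]
  have h1 : Real.exp (-a) ≤ 1 := Real.exp_le_one_iff.mpr (by linarith)
  nlinarith [Real.one_sub_le_exp_neg (b - a), Real.exp_pos (-a)]

section GromovProduct

variable {X : Type*} [PseudoMetricSpace X]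

/-- The Gromov product `(y|z)_x`. -/
noncomputable def gromovProduct (x y z : X) : ℝ := (dist y x + dist z x - dist y z) / 2

theorem gromovProduct_nonneg (x y z : X) : 0 ≤ gromovProduct x y z := by
  have := dist_triangle_right y z x
  unfold gromovProduct; linarith

theorem gromovProduct_comm (x y z : X) : gromovProduct x y z = gromovProduct x z y := by
  unfold gromovProduct; rw [dist_comm y z]; ring

theorem gromovProduct_add_gromovProduct_le (x b y z : X) :
    gromovProduct x b y + gromovProduct x b z ≤ dist b x + gromovProduct x y z := by
  have := dist_triangle_left y z b
  unfold gromovProduct; linarith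

theorem abs_gromovProduct_sub_gromovProduct_le (x y z z' : X) :
    |gromovProduct x y z - gromovProduct x y z'| ≤ dist z z' := by
  have h₁ := abs_dist_sub_le z z' x
  have h₂ := abs_dist_sub_le z z' y
  rw [abs_le] at h₁ h₂ ⊢
  unfold gromovProduct
  rw [dist_comm y z, dist_comm y z']
  constructor <;> linarith

theorem abs_gromovProduct_sub_gromovProduct_lt {Y : Type*} [PseudoMetricSpace Y]
    {x y z : X} {x' y' z' : Y} {ε : ℝ} (hy : |dist y' x' - dist y x| < ε)
    (hz : |dist z' x' - dist z x| < ε) (hyz : |dist y' z' - dist y z| < ε) :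
    |gromovProduct x' y' z' - gromovProduct x y z| < 3 / 2 * ε := by
  rw [abs_lt] at hy hz hyz ⊢
  unfold gromovProduct
  constructor <;> linarith

end GromovProduct

section Modulus

variable {Z : Type*}

def IsModulus (ρ : Z → Z → ℝ) (ε δ : ℝ) : Prop :=
  ∀ ξ η, ρ ξ η < δ → ∀ ζ, |ρ ξ ζ - ρ η ζ| < ε

theorem IsModulus.mono {ρ : Z → Z → ℝ} {ε δ δ' : ℝ} (h : IsModulus ρ ε δ)
    (hδ : δ' ≤ δ) : IsModulus ρ ε δ' :=
  fun ξ η hξη => h ξ η (hξη.trans_le hδ)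

/-- `ρ` is bounded below by a positive number on the compact set of triples where the modulus
fails. -/
theorem IsSemiMetric.exists_isModulus [TopologicalSpace Z] [CompactSpace Z] {ρ : Z → Z → ℝ}
    (hρ : IsSemiMetric ρ) {ε : ℝ} (hε : 0 < ε) : ∃ δ > 0, IsModulus ρ ε δ := by
  obtain ⟨hcont, -, hnonneg, hzero⟩ := hρ
  have hcont' : ∀ {f g : Z × Z × Z → Z}, Continuous f → Continuous g →
      Continuous fun w => ρ (f w) (g w) := fun hf hg => hcont.comp (hf.prodMk hg)
  set S := {w : Z × Z × Z | ε ≤ |ρ w.1 w.2.2 - ρ w.2.1 w.2.2|}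
  have hS : IsCompact S := (isClosed_le continuous_const
    ((hcont' continuous_fst (by fun_prop)).sub (hcont' (by fun_prop) (by fun_prop))).abs).isCompact
  have hpos : ∀ w ∈ S, 0 < ρ w.1 w.2.1 := by
    refine fun w hw => (hnonneg _ _).lt_of_ne' fun h => ?_
    have hw' : ε ≤ |ρ w.1 w.2.2 - ρ w.2.1 w.2.2| := hw
    rw [(hzero _ _).mp h, sub_self, abs_zero] at hw'
    exact hw'.not_gt hε
  obtain ⟨δ, hδ, hδS⟩ :=
    hS.exists_forall_le' (hcont' continuous_fst (by fun_prop)).continuousOn hpos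
  exact ⟨δ, hδ, fun ξ η hξη ζ => not_le.mp fun h => (hδS (ξ, η, ζ) h).not_gt hξη⟩

end Modulus

theorem exists_line_of_isGeodesicallyComplete {X : Type*} [MetricSpace X]
    (hg : IsGeodesicSpace X) (hc : IsGeodesicallyComplete X) (z z' : X) :
    ∃ L : ℝ → X,
      (∀ s t, dist (L s) (L t) = |s - t|) ∧ L 0 = z ∧ L (dist z z') = z' := by
  obtain ⟨γ, hγ⟩ := hg z z'
  obtain ⟨L, hL, hLγ⟩ := hc z z' γ hγ
  refine ⟨L, hL, ?_, ?_⟩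
  · rw [hLγ 0 ⟨le_rfl, dist_nonneg⟩, hγ.1]
  · rw [hLγ _ ⟨dist_nonneg, le_rfl⟩, hγ.2.1]

theorem MapClusterPt.mem_of_isClosed {ι α : Type*} [TopologicalSpace α] {F : Filter ι}
    {f : ι → α} {a : α} {s : Set α} (h : MapClusterPt a F f) (hs : IsClosed s)
    (hf : ∀ᶠ i in F, f i ∈ s) : a ∈ s :=
  hs.closure_subset (ClusterPt.mem_closure_of_mem h _ hf)

namespace GromovProductData

theorem properSpace {X : Type u} [MetricSpace X] (D : GromovProductData X) : ProperSpace X :=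
  ⟨D.proper⟩

variable {X : Type u} [MetricSpace X] (D : GromovProductData X) (x : X)

theorem denseRange_incl : DenseRange D.incl := D.dense_incl

theorem gp_incl_incl (y z : X) :
    D.gp x (D.incl y) (D.incl z) = ENNReal.ofReal (gromovProduct x y z) :=
  D.gp_eq x y z

theorem continuous_gp_left (q : D.Compactification) : Continuous fun w => D.gp x w q :=
  (D.continuous_gp x).comp (continuous_id.prodMk continuous_const)

theorem continuous_gp_right (q : D.Compactification) : Continuous fun w => D.gp x q w :=
  (D.continuous_gp x).comp (continuous_const.prodMk continuous_id)

theorem gp_comm (q q' : D.Compactification) : D.gp x q q' = D.gp x q' q := by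
  have := D.t2C
  refine D.denseRange_incl.induction_on₂ (p := fun q q' => D.gp x q q' = D.gp x q' q)
    (isClosed_eq (D.continuous_gp x) ((D.continuous_gp x).comp continuous_swap))
    (fun y z => ?_) q q'
  simp only [gp_incl_incl, gromovProduct_comm]

theorem gp_incl_add_gp_incl_le (b : X) (q q' : D.Compactification) :
    D.gp x (D.incl b) q + D.gp x (D.incl b) q' ≤ ENNReal.ofReal (dist b x) + D.gp x q q' := by
  refine D.denseRange_incl.induction_on₂
    (p := fun q q' => D.gp x (D.incl b) q + D.gp x (D.incl b) q'
      ≤ ENNReal.ofReal (dist b x) + D.gp x q q')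
    (isClosed_le (((D.continuous_gp_right x _).comp continuous_fst).add
      ((D.continuous_gp_right x _).comp continuous_snd))
      (continuous_const.add (D.continuous_gp x))) (fun y z => ?_) q q'
  simp only [gp_incl_incl]
  rw [← ENNReal.ofReal_add (gromovProduct_nonneg x b y) (gromovProduct_nonneg x b z),
    ← ENNReal.ofReal_add dist_nonneg (gromovProduct_nonneg x y z)]
  exact ENNReal.ofReal_le_ofReal (gromovProduct_add_gromovProduct_le x b y z)

/-- A locally compact dense subspace of a Hausdorff space is open. -/
theorem isOpen_range_incl : IsOpen (Set.range D.incl) := by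
  have := D.t2C
  have := D.properSpace
  refine isOpen_iff_mem_nhds.mpr ?_
  rintro _ ⟨z, rfl⟩
  obtain ⟨K, hKc, hKz⟩ := exists_compact_mem_nhds z
  obtain ⟨V, hVo, hV⟩ := D.isEmbedding_incl.isInducing.isOpen_iff.mp (isOpen_interior (s := K))
  have hVK : V ⊆ D.incl '' K := by
    refine (D.dense_incl.open_subset_closure_inter hVo).trans
      (closure_minimal ?_ (hKc.image D.isEmbedding_incl.continuous).isClosed)
    rintro _ ⟨hwV, w, rfl⟩
    exact ⟨w, interior_subset (hV ▸ hwV : w ∈ interior K), rfl⟩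
  refine Filter.mem_of_superset (hVo.mem_nhds ?_) (hVK.trans (Set.image_subset_range _ _))
  show z ∈ D.incl ⁻¹' V
  rw [hV]; exact mem_interior_iff_mem_nhds.mpr hKz

theorem compactSpace_boundary : CompactSpace D.Boundary := by
  have := D.compactC
  refine isCompact_univ_iff.mp (D.isEmbedding_bIncl.isCompact_iff.mpr ?_)
  rw [Set.image_univ, D.range_bIncl]
  exact D.isOpen_range_incl.isClosed_compl.isCompact

theorem visual_eq_toReal_exp (ξ η : D.Boundary) :
    D.visual x ξ η = (EReal.exp (-(D.gp x (D.bIncl ξ) (D.bIncl η) : EReal))).toReal := by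
  unfold visual
  generalize D.gp x (D.bIncl ξ) (D.bIncl η) = t
  split_ifs with ht
  · simp [ht]
  · lift t to NNReal using ht
    rw [EReal.coe_nnreal_eq_coe_real, ← EReal.coe_neg, EReal.exp_coe,
      ENNReal.toReal_ofReal (Real.exp_nonneg _), ENNReal.coe_toReal]

theorem visual_nonneg (ξ η : D.Boundary) : 0 ≤ D.visual x ξ η := by
  rw [visual_eq_toReal_exp]; exact ENNReal.toReal_nonneg

theorem visual_le_one (ξ η : D.Boundary) : D.visual x ξ η ≤ 1 := by
  unfold visual
  split_ifs
  · exact zero_le_one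
  · exact Real.exp_le_one_iff.mpr (neg_nonpos.mpr ENNReal.toReal_nonneg)

theorem visual_comm (ξ η : D.Boundary) : D.visual x ξ η = D.visual x η ξ := by
  simp only [visual, D.gp_comm x (D.bIncl ξ)]

theorem visual_eq_zero_iff {ξ η : D.Boundary} : D.visual x ξ η = 0 ↔ ξ = η := by
  rw [← D.gp_top_iff x ξ η]
  unfold visual
  split_ifs with h
  · exact iff_of_true rfl h
  · exact iff_of_false (Real.exp_pos _).ne' h

theorem visual_le_exp_neg {ξ η : D.Boundary} {c : ℝ}
    (h : ENNReal.ofReal c ≤ D.gp x (D.bIncl ξ) (D.bIncl η)) : D.visual x ξ η ≤ Real.exp (-c) := by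
  unfold visual
  split_ifs with htop
  · exact (Real.exp_pos _).le
  · exact Real.exp_le_exp.mpr (neg_le_neg ((ENNReal.ofReal_le_iff_le_toReal htop).mp h))

theorem exp_neg_le_visual {ξ η : D.Boundary} {c : ℝ} (hc : 0 ≤ c)
    (h : D.gp x (D.bIncl ξ) (D.bIncl η) ≤ ENNReal.ofReal c) : Real.exp (-c) ≤ D.visual x ξ η := by
  unfold visual
  rw [if_neg (ne_top_of_le_ne_top ENNReal.ofReal_ne_top h)]
  exact Real.exp_le_exp.mpr (neg_le_neg (ENNReal.toReal_le_of_le_ofReal hc h))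

theorem continuous_visual : Continuous (Function.uncurry (D.visual x)) := by
  have hgp : Continuous fun w : D.Boundary × D.Boundary => D.gp x (D.bIncl w.1) (D.bIncl w.2) :=
    (D.continuous_gp x).comp (D.isEmbedding_bIncl.continuous.prodMap D.isEmbedding_bIncl.continuous)
  have hexp : Continuous fun w : D.Boundary × D.Boundary =>
      EReal.exp (-(D.gp x (D.bIncl w.1) (D.bIncl w.2) : EReal)) :=
    EReal.expHomeomorph.continuous.comp
      (continuous_neg.comp (continuous_coe_ennreal_ereal.comp hgp))
  have hfin : ∀ w : D.Boundary × D.Boundary,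
      EReal.exp (-(D.gp x (D.bIncl w.1) (D.bIncl w.2) : EReal)) ≠ ⊤ := by
    simp only [ne_eq, EReal.exp_eq_top_iff, EReal.neg_eq_top_iff]
    exact fun w => EReal.coe_ennreal_ne_bot _
  exact (ENNReal.continuousOn_toReal.comp_continuous hexp hfin).congr fun w =>
    (D.visual_eq_toReal_exp x w.1 w.2).symm

theorem isSemiMetric_visual : IsSemiMetric (D.visual x) :=
  ⟨D.continuous_visual x, D.visual_comm x, D.visual_nonneg x, fun _ _ => D.visual_eq_zero_iff x⟩

theorem exists_isModulus_visual {ε : ℝ} (hε : 0 < ε) : ∃ δ > 0, IsModulus (D.visual x) ε δ :=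
  have := D.compactSpace_boundary
  (D.isSemiMetric_visual x).exists_isModulus hε

/-- `p` lies on a geodesic ray from `x` to `ξ`, as far as Gromov products based at `x` see. -/
def IsOnRay (p : X) (ξ : D.Boundary) : Prop :=
  D.gp x (D.incl p) (D.bIncl ξ) = ENNReal.ofReal (dist p x)

variable {D x} in
theorem IsOnRay.gp_le {p : X} {ξ : D.Boundary} (h : D.IsOnRay x p ξ) (q : D.Compactification) :
    D.gp x (D.incl p) q ≤ D.gp x (D.bIncl ξ) q := by
  have := D.gp_incl_add_gp_incl_le x p (D.bIncl ξ) q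
  rw [h] at this
  exact (ENNReal.add_le_add_iff_left ENNReal.ofReal_ne_top).mp this

theorem exists_bIncl_eq_of_mapClusterPt {ι : Type*} {F : Filter ι} {g : ι → X}
    (hg : Tendsto g F (cocompact X)) {q : D.Compactification} (hq : MapClusterPt q F (D.incl ∘ g)) :
    ∃ ξ, D.bIncl ξ = q := by
  rw [← Set.mem_range, D.range_bIncl]
  rintro ⟨z, rfl⟩
  have := D.properSpace
  rw [MapClusterPt, ← Filter.map_map, ← MapClusterPt,
    D.isEmbedding_incl.isInducing.mapClusterPt_iff] at hq
  exact hq.neBot.ne (disjoint_iff.mp ((disjoint_nhds_cocompact z).mono_right hg))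

theorem exists_mapClusterPt_of_line {L : ℝ → X} (hL : ∀ s t, dist (L s) (L t) = |s - t|) :
    ∃ ξ, MapClusterPt (D.bIncl ξ) atTop (D.incl ∘ L) := by
  have := D.compactC
  obtain ⟨q, hq⟩ := exists_clusterPt_of_compactSpace (map (D.incl ∘ L) atTop)
  have hL' : Tendsto (fun t => dist (L t) (L 0)) atTop atTop := by
    simpa only [hL, sub_zero] using tendsto_abs_atTop_atTop
  obtain ⟨ξ, rfl⟩ :=
    D.exists_bIncl_eq_of_mapClusterPt (tendsto_cocompact_of_tendsto_dist_comp_atTop _ hL') hq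
  exact ⟨ξ, hq⟩

theorem exists_isOnRay_of_line {L : ℝ → X} (hL : ∀ s t, dist (L s) (L t) = |s - t|)
    (hL0 : L 0 = x) : ∃ ξ, ∀ t, 0 ≤ t → D.IsOnRay x (L t) ξ := by
  obtain ⟨ξ, hξ⟩ := D.exists_mapClusterPt_of_line hL
  have hdist : ∀ s, dist (L s) x = |s| := fun s => by rw [← hL0, hL, sub_zero]
  refine ⟨ξ, fun t ht => hξ.mem_of_isClosed
    (s := {w | D.gp x (D.incl (L t)) w = ENNReal.ofReal (dist (L t) x)})
    (isClosed_eq (D.continuous_gp_right x _) continuous_const) ?_⟩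
  filter_upwards [eventually_ge_atTop t] with s hs
  show D.gp x (D.incl (L t)) (D.incl (L s)) = _
  rw [gp_incl_incl, gromovProduct, hdist, hdist, hL, abs_of_nonneg ht,
    abs_of_nonneg (ht.trans hs), abs_of_nonpos (by linarith)]
  congr 1; ring

theorem exists_isOnRay (p : X) : ∃ ξ, D.IsOnRay x p ξ := by
  obtain ⟨L, hL, hL0, hLp⟩ :=
    exists_line_of_isGeodesicallyComplete D.geodesic D.geodesicallyComplete x p
  obtain ⟨ξ, hξ⟩ := D.exists_isOnRay_of_line x hL hL0
  exact ⟨ξ, hLp ▸ hξ _ dist_nonneg⟩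

theorem exists_isOnRay_le_gp (ξ : D.Boundary) {R : ℝ} (hR : 0 ≤ R) :
    ∃ p ξ', dist p x = R ∧ D.IsOnRay x p ξ' ∧
      ENNReal.ofReal R ≤ D.gp x (D.bIncl ξ') (D.bIncl ξ) := by
  obtain ⟨_, ⟨z, rfl⟩, hz⟩ : ∃ w ∈ Set.range D.incl, ENNReal.ofReal R < D.gp x w (D.bIncl ξ) :=
    D.dense_incl.exists_mem_open (isOpen_lt continuous_const (D.continuous_gp_left x _))
      ⟨D.bIncl ξ, show _ < D.gp x _ _ by
        rw [(D.gp_top_iff x ξ ξ).mpr rfl]; exact ENNReal.ofReal_lt_top⟩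
  obtain ⟨L, hL, hL0, hLz⟩ :=
    exists_line_of_isGeodesicallyComplete D.geodesic D.geodesicallyComplete x z
  obtain ⟨ξ', hξ'⟩ := D.exists_isOnRay_of_line x hL hL0
  refine ⟨L R, ξ', by rw [← hL0, hL, sub_zero, abs_of_nonneg hR], hξ' R hR, ?_⟩
  have hz' := (hξ' (dist x z) dist_nonneg).gp_le (D.bIncl ξ)
  rw [hLz] at hz'
  exact (le_of_lt hz).trans hz'

theorem visual_le_exp_neg_gromovProduct {p p' : X} {ξ ξ' : D.Boundary} (hξ : D.IsOnRay x p ξ)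
    (hξ' : D.IsOnRay x p' ξ') : D.visual x ξ ξ' ≤ Real.exp (-gromovProduct x p p') := by
  refine D.visual_le_exp_neg x ?_
  calc ENNReal.ofReal (gromovProduct x p p') = D.gp x (D.incl p') (D.incl p) := by
        rw [gp_incl_incl, gromovProduct_comm]
    _ ≤ D.gp x (D.bIncl ξ') (D.incl p) := hξ'.gp_le _
    _ = D.gp x (D.incl p) (D.bIncl ξ') := D.gp_comm x _ _
    _ ≤ D.gp x (D.bIncl ξ) (D.bIncl ξ') := hξ.gp_le _

theorem gp_le_of_mapClusterPt {ι κ : Type*} {F : Filter ι} {G : Filter κ} {M : ι → X}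
    {M' : κ → X} {q q' : D.Compactification} (hq : MapClusterPt q F (D.incl ∘ M))
    (hq' : MapClusterPt q' G (D.incl ∘ M')) {c : ℝ}
    (h : ∀ᶠ s in F, ∀ᶠ t in G, gromovProduct x (M s) (M' t) ≤ c) :
    D.gp x q q' ≤ ENNReal.ofReal c := by
  refine hq.mem_of_isClosed (s := {w | D.gp x w q' ≤ ENNReal.ofReal c})
    (isClosed_le (D.continuous_gp_left x _) continuous_const) (h.mono fun s hs => ?_)
  refine hq'.mem_of_isClosed (s := {w | D.gp x (D.incl (M s)) w ≤ ENNReal.ofReal c})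
    (isClosed_le (D.continuous_gp_right x _) continuous_const) (hs.mono fun t ht => ?_)
  show D.gp x (D.incl (M s)) (D.incl (M' t)) ≤ _
  rw [gp_incl_incl]
  exact ENNReal.ofReal_le_ofReal ht

theorem le_gp_of_mapClusterPt {M : ℝ → X} {p p' : X}
    (hM : ∀ s, 0 ≤ s → dist (M s) p = s ∧ dist (M s) p' = s + dist p p') {q : D.Compactification}
    (hq : MapClusterPt q atTop (D.incl ∘ M)) :
    ENNReal.ofReal (dist p x - gromovProduct x p p') ≤ D.gp x (D.incl p) q := by
  refine hq.mem_of_isClosed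
    (s := {w | ENNReal.ofReal (dist p x - gromovProduct x p p') ≤ D.gp x (D.incl p) w})
    (isClosed_le continuous_const (D.continuous_gp_right x _)) ?_
  filter_upwards [eventually_ge_atTop 0] with s hs
  show _ ≤ D.gp x (D.incl p) (D.incl (M s))
  obtain ⟨h₁, h₂⟩ := hM s hs
  have := dist_triangle (M s) x p'
  rw [gp_incl_incl]
  refine ENNReal.ofReal_le_ofReal ?_
  unfold gromovProduct
  rw [dist_comm p (M s), dist_comm x p'] at *
  linarith

/-- `α` and `β` are the two ends of a geodesic line through `p` and `p'`. -/
theorem exists_gp_le_gromovProduct (p p' : X) : ∃ α β : D.Boundary,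
    D.gp x (D.bIncl α) (D.bIncl β) ≤ ENNReal.ofReal (gromovProduct x p p') ∧
    ENNReal.ofReal (dist p x - gromovProduct x p p') ≤ D.gp x (D.incl p) (D.bIncl α) ∧
    ENNReal.ofReal (dist p' x - gromovProduct x p p') ≤ D.gp x (D.incl p') (D.bIncl β) := by
  obtain ⟨L, hL, hL0, hLd⟩ :=
    exists_line_of_isGeodesicallyComplete D.geodesic D.geodesicallyComplete p p'
  have hd : 0 ≤ dist p p' := dist_nonneg
  have hLp : ∀ s, dist (L s) p = |s| := fun s => by simpa only [hL0, sub_zero] using hL s 0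
  have hLp' : ∀ s, dist (L s) p' = |s - dist p p'| := fun s => by
    simpa only [hLd] using hL s (dist p p')
  have hα₀ : ∀ s, 0 ≤ s → dist (L (-s)) p = s ∧ dist (L (-s)) p' = s + dist p p' := fun s hs =>
    ⟨by rw [hLp, abs_neg, abs_of_nonneg hs], by rw [hLp', abs_of_nonpos (by linarith)]; ring⟩
  have hβ₀ : ∀ t, 0 ≤ t →
      dist (L (dist p p' + t)) p' = t ∧ dist (L (dist p p' + t)) p = t + dist p' p := fun t ht =>
    ⟨by rw [hLp', add_sub_cancel_left, abs_of_nonneg ht],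
      by rw [hLp, abs_of_nonneg (by linarith), dist_comm p' p, add_comm]⟩
  obtain ⟨α, hα⟩ := D.exists_mapClusterPt_of_line (L := fun s => L (-s)) fun s t => by
    rw [hL, ← abs_neg]; ring_nf
  obtain ⟨β, hβ⟩ := D.exists_mapClusterPt_of_line (L := fun t => L (dist p p' + t)) fun s t => by
    rw [hL]; ring_nf
  refine ⟨α, β, D.gp_le_of_mapClusterPt x hα hβ ?_, D.le_gp_of_mapClusterPt x hα₀ hα, ?_⟩
  · filter_upwards [eventually_ge_atTop 0] with s hs
    filter_upwards [eventually_ge_atTop 0] with t ht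
    have h₁ := dist_triangle (L (-s)) p x
    have h₂ := dist_triangle (L (dist p p' + t)) p' x
    have h₃ : dist (L (-s)) (L (dist p p' + t)) = s + dist p p' + t := by
      rw [hL, abs_of_nonpos (by linarith)]; ring
    unfold gromovProduct
    linarith [(hα₀ s hs).1, (hβ₀ t ht).1]
  · simpa only [gromovProduct_comm x p'] using D.le_gp_of_mapClusterPt x hβ₀ hβ

theorem exp_neg_gromovProduct_sub_le_visual {ε δ : ℝ} (hmod : IsModulus (D.visual x) ε δ)
    {p p' : X} {ξ ξ' : D.Boundary} (hξ : D.IsOnRay x p ξ) (hξ' : D.IsOnRay x p' ξ')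
    (hp : Real.exp (gromovProduct x p p' - dist p x) < δ)
    (hp' : Real.exp (gromovProduct x p p' - dist p' x) < δ) :
    Real.exp (-gromovProduct x p p') - 2 * ε ≤ D.visual x ξ ξ' := by
  obtain ⟨α, β, hαβ, hα, hβ⟩ := D.exists_gp_le_gromovProduct x p p'
  have hξα : D.visual x ξ α < δ :=
    (D.visual_le_exp_neg x (hα.trans (hξ.gp_le _))).trans_lt (by rwa [neg_sub])
  have hξ'β : D.visual x ξ' β < δ :=
    (D.visual_le_exp_neg x (hβ.trans (hξ'.gp_le _))).trans_lt (by rwa [neg_sub])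
  have h₁ := hmod ξ α hξα ξ'
  have h₂ := hmod ξ' β hξ'β α
  have h₃ := D.exp_neg_le_visual x (gromovProduct_nonneg x p p') hαβ
  rw [D.visual_comm x ξ' α, D.visual_comm x β α] at h₂
  rw [abs_lt] at h₁ h₂
  linarith

theorem abs_visual_sub_exp_neg_gromovProduct_le {ε δ R : ℝ} (hmod : IsModulus (D.visual x) ε δ)
    (hδε : δ ≤ ε) (hR : Real.exp (-(R / 2)) < δ) {p p' : X} (hp : R ≤ dist p x)
    (hp' : R ≤ dist p' x) {ξ ξ' : D.Boundary} (hξ : D.IsOnRay x p ξ) (hξ' : D.IsOnRay x p' ξ') :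
    |D.visual x ξ ξ' - Real.exp (-gromovProduct x p p')| ≤ 2 * ε := by
  have hup := D.visual_le_exp_neg_gromovProduct x hξ hξ'
  have h₀ := D.visual_nonneg x ξ ξ'
  rw [abs_le]
  rcases le_or_gt (gromovProduct x p p') (R / 2) with h | h
  · have hexp : ∀ {s}, R ≤ s → Real.exp (gromovProduct x p p' - s) < δ := fun hs =>
      (Real.exp_le_exp.mpr (by linarith)).trans_lt hR
    have := D.exp_neg_gromovProduct_sub_le_visual x hmod hξ hξ' (hexp hp) (hexp hp')
    constructor <;> linarith
  · have : Real.exp (-gromovProduct x p p') < δ := (Real.exp_lt_exp.mpr (by linarith)).trans hR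
    have := Real.exp_pos (-gromovProduct x p p')
    constructor <;> linarith

section TwoSpaces

variable {Y : Type v} [MetricSpace Y] (DY : GromovProductData Y) (y : Y)

theorem exists_isEpsIsometry_two : ∃ f, IsEpsIsometry (D.visual x) (DY.visual y) 2 f := by
  obtain ⟨ξ, -⟩ := D.exists_isOnRay x x
  obtain ⟨η, -⟩ := DY.exists_isOnRay y y
  have : Nonempty D.Boundary := ⟨ξ⟩
  exact ⟨fun _ => η, isEpsIsometry_two_of_mem_Icc
    (fun _ _ => ⟨D.visual_nonneg x _ _, D.visual_le_one x _ _⟩)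
    (fun _ _ => ⟨DY.visual_nonneg y _ _, DY.visual_le_one y _ _⟩) _⟩

variable {ε δ R : ℝ}

theorem abs_visual_sub_visual_lt (hmodX : IsModulus (D.visual x) ε δ)
    (hmodY : IsModulus (DY.visual y) ε δ) (hδε : δ ≤ ε) (hR : Real.exp (-(R / 2)) < δ)
    {p p' : X} {q q' : Y} (hp : R ≤ dist p x) (hp' : R ≤ dist p' x) (hq : R ≤ dist q y)
    (hq' : R ≤ dist q' y)
    (hpq : |gromovProduct y q q' - gromovProduct x p p'| < 3 / 2 * ε)
    {ξ η ξ' η' : D.Boundary} (hξ' : D.IsOnRay x p ξ') (hη' : D.IsOnRay x p' η')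
    (hξξ' : D.visual x ξ' ξ < δ) (hηη' : D.visual x η' η < δ)
    {ζ ζ' : DY.Boundary} (hζ : DY.IsOnRay y q ζ) (hζ' : DY.IsOnRay y q' ζ') :
    |DY.visual y ζ ζ' - D.visual x ξ η| < 8 * ε := by
  have h₁ := DY.abs_visual_sub_exp_neg_gromovProduct_le y hmodY hδε hR hq hq' hζ hζ'
  have h₂ := D.abs_visual_sub_exp_neg_gromovProduct_le x hmodX hδε hR hp hp' hξ' hη'
  have h₃ := (abs_exp_neg_sub_exp_neg_le (gromovProduct_nonneg y q q')
    (gromovProduct_nonneg x p p')).trans_lt hpq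
  have h₄ := hmodX ξ' ξ hξξ' η'
  have h₅ := hmodX η' η hηη' ξ
  rw [D.visual_comm x η' ξ, D.visual_comm x η ξ] at h₅
  rw [abs_le] at h₁ h₂
  rw [abs_lt] at h₃ h₄ h₅ ⊢
  constructor <;> linarith

theorem visual_lt_of_isOnRay (hmodX : IsModulus (D.visual x) ε δ)
    (hmodY : IsModulus (DY.visual y) ε δ) (hδε : δ ≤ ε) (hR : Real.exp (-(R / 2)) < δ)
    {a p : X} (ha : R ≤ dist a x) (hp : R ≤ dist p x) {ξ ξ' : D.Boundary}
    (hξ : D.IsOnRay x a ξ) (hξ' : D.IsOnRay x p ξ') (hξξ' : D.visual x ξ' ξ < δ) {b w q : Y}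
    (hbq : dist b q < ε) (hwb : |gromovProduct y w b - gromovProduct x p a| < 3 / 2 * ε)
    {η ζ ζ₀ : DY.Boundary} (hη : DY.IsOnRay y w η) (hζ₀ : DY.IsOnRay y q ζ₀)
    (hζζ₀ : DY.visual y ζ₀ ζ < δ) :
    DY.visual y η ζ < 8 * ε := by
  have h₁ := hmodY ζ₀ ζ hζζ₀ η
  rw [DY.visual_comm y ζ₀, DY.visual_comm y ζ] at h₁
  have h₂ := DY.visual_le_exp_neg_gromovProduct y hη hζ₀
  have h₃ := (abs_exp_neg_sub_exp_neg_le (gromovProduct_nonneg y w q)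
    (gromovProduct_nonneg y w b)).trans ((abs_gromovProduct_sub_gromovProduct_le y w q b).trans
    (dist_comm q b ▸ hbq.le))
  have h₄ := (abs_exp_neg_sub_exp_neg_le (gromovProduct_nonneg y w b)
    (gromovProduct_nonneg x p a)).trans_lt hwb
  have h₅ := D.abs_visual_sub_exp_neg_gromovProduct_le x hmodX hδε hR hp ha hξ' hξ
  rw [abs_le] at h₃ h₅
  rw [abs_lt] at h₁ h₄
  linarith

/-- `ξ` is sent to a ray endpoint of the image under `φ` of a point of the sphere of radius
`R + 2 * ε` from which `ξ` is seen. -/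
theorem exists_isEpsIsometry_of_approx (hmodX : IsModulus (D.visual x) ε δ)
    (hmodY : IsModulus (DY.visual y) ε δ) (hδε : δ ≤ ε) (hR0 : 0 ≤ R)
    (hR : Real.exp (-(R / 2)) < δ) (φ : closedBall x (R + 2 * ε) → closedBall y (R + 2 * ε))
    (hφx : ∀ a, |dist (φ a : Y) y - dist (a : X) x| < ε)
    (hφ : ∀ a b, |dist (φ a : Y) (φ b) - dist (a : X) b| < ε)
    (hnet : ∀ q : closedBall y (R + 2 * ε), ∃ a, dist (φ a : Y) q < ε) :
    ∃ f : D.Boundary → DY.Boundary, IsEpsIsometry (D.visual x) (DY.visual y) (8 * ε) f := by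
  have hε : 0 < ε := ((Real.exp_pos _).trans hR).trans_le hδε
  have hr : 0 ≤ R + 2 * ε := by positivity
  have hexp : Real.exp (-(R + 2 * ε)) < δ := (Real.exp_le_exp.mpr (by linarith)).trans_lt hR
  choose A ξ' hA using fun ξ => D.exists_isOnRay_le_gp x ξ hr
  have hAξ : ∀ ξ, D.visual x (ξ' ξ) ξ < δ := fun ξ =>
    (D.visual_le_exp_neg x (hA ξ).2.2).trans_lt hexp
  have hAr : ∀ ξ, A ξ ∈ closedBall x (R + 2 * ε) := fun ξ => mem_closedBall.mpr (hA ξ).1.le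
  set Φ : D.Boundary → Y := fun ξ => φ ⟨A ξ, hAr ξ⟩
  have hΦ : ∀ ξ, R ≤ dist (Φ ξ) y := fun ξ => by
    have := hφx ⟨A ξ, hAr ξ⟩
    rw [abs_lt] at this
    linarith [(hA ξ).1]
  choose f hf using fun ξ => DY.exists_isOnRay y (Φ ξ)
  refine ⟨f, fun ξ η => ?_, fun ζ => ?_⟩
  · exact D.abs_visual_sub_visual_lt x DY y hmodX hmodY hδε hR (by linarith [(hA ξ).1])
      (by linarith [(hA η).1]) (hΦ ξ) (hΦ η)
      (abs_gromovProduct_sub_gromovProduct_lt (hφx _) (hφx _) (hφ _ _)) (hA ξ).2.1 (hA η).2.1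
      (hAξ ξ) (hAξ η) (hf ξ) (hf η)
  · obtain ⟨q, ζ₀, hq, hζ₀, hζζ₀⟩ := DY.exists_isOnRay_le_gp y ζ hr
    obtain ⟨a, ha⟩ := hnet ⟨q, mem_closedBall.mpr hq.le⟩
    obtain ⟨ξ, hξ⟩ := D.exists_isOnRay x a
    refine ⟨ξ, D.visual_lt_of_isOnRay x DY y hmodX hmodY hδε hR ?_ (by linarith [(hA ξ).1]) hξ
      (hA ξ).2.1 (hAξ ξ) ha
      (abs_gromovProduct_sub_gromovProduct_lt (hφx _) (hφx a) (hφ _ a)) (hf ξ) hζ₀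
      ((DY.visual_le_exp_neg y hζζ₀).trans_lt hexp)⟩
    have h₁ := hφx a
    have h₂ := dist_triangle q (φ a : Y) y
    rw [abs_lt] at h₁
    rw [dist_comm] at ha
    linarith

end TwoSpaces

end GromovProductData

theorem boundaries_AI_converge_of_GH_converges
    {X : ℕ → Type u} [∀ n, MetricSpace (X n)] (D : ∀ n, GromovProductData (X n))
    (x : ∀ n, X n)
    {Y : Type u} [MetricSpace Y] (DY : GromovProductData Y) (y : Y)
    (hGH : PointedGHConverges X x Y y)
    (hEq : EquicontinuousFamily (fun n => (D n).visual (x n))) :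
    AIConverges (fun n => (D n).visual (x n)) (DY.visual y) := by
  refine aiConverges_of_eventually_isEpsIsometry
    (fun n => ⟨2, two_pos, (D n).exists_isEpsIsometry_two (x n) DY y⟩) fun ε hε => ?_
  have hε' : 0 < ε / 8 := by positivity
  obtain ⟨δX, hδX, hX⟩ := hEq (ε / 8) hε'
  obtain ⟨δY, hδY, hY⟩ := DY.exists_isModulus_visual y hε'
  set δ := min (min δX δY) (ε / 8)
  have hδ : 0 < δ := lt_min (lt_min hδX hδY) hε'
  obtain ⟨R, hR, hR0⟩ : ∃ R, Real.exp (-(R / 2)) < δ ∧ 0 ≤ R :=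
    (((Real.tendsto_exp_neg_atTop_nhds_zero.comp (tendsto_id.atTop_div_const two_pos)).eventually
      (gt_mem_nhds hδ)).and (eventually_ge_atTop 0)).exists
  obtain ⟨N, hN⟩ := hGH (R + 2 * (ε / 8)) (by positivity) (ε / 8) hε'
  filter_upwards [eventually_ge_atTop N] with n hn
  obtain ⟨φ, hφx, hφ, hnet⟩ := hN n hn
  have hφx' : ∀ a, |dist (φ a : Y) y - dist (a : X n) (x n)| < ε / 8 := fun a => by
    simpa only [hφx] using hφ a ⟨x n, mem_closedBall_self (by positivity)⟩
  simpa only [mul_div_cancel₀ ε (by norm_num : (8 : ℝ) ≠ 0)] using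
    (D n).exists_isEpsIsometry_of_approx (x n) DY y
      (IsModulus.mono (ρ := (D n).visual (x n)) (hX n) ((min_le_left _ _).trans (min_le_left _ _)))
      (hY.mono ((min_le_left _ _).trans (min_le_right _ _))) (min_le_right _ _) hR0 hR φ
      hφx' hφ hnet
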